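/- arXiv:math/0604526 — 7 statements merged into one kernel-verified Lean document; each statement's English description precedes it below -/
import Mathlib

section
/- Let E be a finite-dimensional real inner product space, b ∈ E a unit vector, and c a real constant. Define G : E → E by G(y) = c · q(y) · v(y), where v(y) = y - ⟨b,y⟩b and q(y) = ‖v(y)‖. Then at every y ∈ E with q(y) ≠ 0 the map G is three times continuously differentiable, and its third derivative, as a symmetric trilinear map, is given by D³G(y)(h₁,h₂,h₃) = (c / q(y)) · ( η_y(h₁)·η̄_y(h₂,h₃) + η_y(h₂)·η̄_y(h₁,h₃) + η_y(h₃)·η̄_y(h₁,h₂) ), where η_y(h) = h - ⟨b,h⟩b - (⟨v(y),h⟩/q(y)²)v(y) and η̄_y(h,k) = ⟨h,k⟩ - ⟨b,h⟩⟨b,k⟩ - ⟨v(y),h⟩⟨v(y),k⟩/q(y)². -/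
/-!
Write `v = A`, where `A = id - ⟪b, ·⟫ b` is the orthogonal projection onto `b⊥`, so that
`G = c • f` with `f w = ‖A w‖ • A w`. On the open set `{A w ≠ 0}` the map `f` is smooth, and its
derivatives of order one, two and three are computed successively: each time the previous closed
form holds on a neighbourhood, so differentiating it gives the next one. Since `‖b‖ = 1`,
`⟪A u, A w⟫ = ⟪u, w⟫ - ⟪b, u⟫⟪b, w⟫`, which identifies the resulting terms with `η` and `η̄`.
-/

open Filter Topology RealInnerProductSpace

theorem iteratedFDeriv_succ_apply_cons_of_eventuallyEq {𝕜 E F : Type*} [NontriviallyNormedField 𝕜]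
    [NormedAddCommGroup E] [NormedSpace 𝕜 E] [NormedAddCommGroup F] [NormedSpace 𝕜 F]
    {f : E → F} {n : ℕ} {x : E} (hf : DifferentiableAt 𝕜 (iteratedFDeriv 𝕜 n f) x)
    {m : Fin n → E} {g : E → F} {g' : E →L[𝕜] F}
    (hg : (fun z => iteratedFDeriv 𝕜 n f z m) =ᶠ[𝓝 x] g) (hg' : HasFDerivAt g g' x) (h : E) :
    iteratedFDeriv 𝕜 (n + 1) f x (Fin.cons h m) = g' h := by
  rw [iteratedFDeriv_succ_apply_left, Fin.cons_zero, Fin.tail_cons,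
    ← fderiv_continuousMultilinear_apply_const_apply hf, hg.fderiv_eq, hg'.fderiv]

section NormSmul

variable {E F : Type*} [NormedAddCommGroup E] [NormedSpace ℝ E]
  [NormedAddCommGroup F] [InnerProductSpace ℝ F] (A : E →L[ℝ] F) {z : E}

theorem hasFDerivAt_norm_comp_clm (hz : A z ≠ 0) :
    HasFDerivAt (fun w => ‖A w‖) (‖A z‖⁻¹ • (innerSL ℝ (A z)).comp A) z := by
  have hsq := (A.hasFDerivAt (x := z)).norm_sq.sqrt (by positivity)
  simp only [Real.sqrt_sq (norm_nonneg _)] at hsq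
  convert hsq using 1
  ext h
  simp only [smul_apply, ContinuousLinearMap.comp_apply, coe_innerSL_apply, smul_eq_mul, one_div,
    mul_inv_rev, nsmul_eq_mul, Nat.cast_ofNat]
  field_simp

theorem hasFDerivAt_inv_norm_comp_clm (hz : A z ≠ 0) :
    HasFDerivAt (fun w => ‖A w‖⁻¹) (-(‖A z‖ ^ 3)⁻¹ • (innerSL ℝ (A z)).comp A) z := by
  refine ((hasDerivAt_inv (norm_ne_zero_iff.2 hz)).comp_hasFDerivAt z
    (hasFDerivAt_norm_comp_clm A hz)).congr_fderiv ?_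
  rw [smul_smul]
  congr 1
  field_simp

theorem hasFDerivAt_inner_comp_clm_left (u : F) :
    HasFDerivAt (fun w => ⟪A w, u⟫) ((innerSL ℝ u).comp A) z := by
  convert ((innerSL ℝ u).comp A).hasFDerivAt using 1
  ext; simp [real_inner_comm]

theorem contDiffAt_norm_smul_comp_clm (hz : A z ≠ 0) {n : WithTop ℕ∞} :
    ContDiffAt ℝ n (fun w => ‖A w‖ • A w) z :=
  ((contDiffAt_norm ℝ hz).comp z A.contDiff.contDiffAt).smul A.contDiff.contDiffAt

theorem iteratedFDeriv_one_norm_smul_comp_clm_apply (hz : A z ≠ 0) (h : E) :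
    iteratedFDeriv ℝ 1 (fun w => ‖A w‖ • A w) z ![h] =
      ‖A z‖ • A h + (‖A z‖⁻¹ * ⟪A z, A h⟫) • A z := by
  have hf : HasFDerivAt (fun w => ‖A w‖ • A w) _ z :=
    (hasFDerivAt_norm_comp_clm A hz).smul A.hasFDerivAt
  rw [iteratedFDeriv_one_apply, hf.fderiv]
  simp

theorem iteratedFDeriv_two_norm_smul_comp_clm_apply (hz : A z ≠ 0) (h k : E) :
    iteratedFDeriv ℝ 2 (fun w => ‖A w‖ • A w) z ![h, k] =
      (‖A z‖⁻¹ * ⟪A z, A k⟫) • A h + (‖A z‖⁻¹ * ⟪A z, A h⟫) • A k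
        + (‖A z‖⁻¹ * ⟪A h, A k⟫ - ‖A z‖⁻¹ ^ 3 * (⟪A z, A h⟫ * ⟪A z, A k⟫)) • A z := by
  have hD1 : (fun w => iteratedFDeriv ℝ 1 (fun w => ‖A w‖ • A w) w ![k]) =ᶠ[𝓝 z]
      fun w => ‖A w‖ • A k + (‖A w‖⁻¹ * ⟪A w, A k⟫) • A w := by
    filter_upwards [A.continuous.continuousAt.eventually_ne hz] with w hw
    exact iteratedFDeriv_one_norm_smul_comp_clm_apply A hw k
  have hD1' := ((hasFDerivAt_norm_comp_clm A hz).smul (hasFDerivAt_const (A k) z)).add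
    (((hasFDerivAt_inv_norm_comp_clm A hz).mul (hasFDerivAt_inner_comp_clm_left A (A k))).smul
      A.hasFDerivAt)
  refine (iteratedFDeriv_succ_apply_cons_of_eventuallyEq
    ((contDiffAt_norm_smul_comp_clm A hz (n := 2)).differentiableAt_iteratedFDeriv (by norm_num))
    hD1 hD1' h).trans ?_
  simp only [smul_zero, zero_add, Pi.mul_apply, neg_smul, smul_neg, add_apply,
    ContinuousLinearMap.smulRight_apply, smul_apply, ContinuousLinearMap.comp_apply,
    coe_innerSL_apply, smul_eq_mul, neg_apply, real_inner_comm (A k) (A h)]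
  match_scalars <;> field_simp
  ring

/-- `orthPart A z` and `orthInner A z` are the paper's `η_z` and `η̄_z` for a general `A`;
`orthPart A z h` is the component of `A h` orthogonal to `A z`. -/
noncomputable def orthPart (z h : E) : F := A h - (⟪A z, A h⟫ / ‖A z‖ ^ 2) • A z

noncomputable def orthInner (z h k : E) : ℝ := ⟪A h, A k⟫ - ⟪A z, A h⟫ * ⟪A z, A k⟫ / ‖A z‖ ^ 2

theorem iteratedFDeriv_three_norm_smul_comp_clm_apply (hz : A z ≠ 0) (h₁ h₂ h₃ : E) :
    iteratedFDeriv ℝ 3 (fun w => ‖A w‖ • A w) z ![h₁, h₂, h₃] =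
      ‖A z‖⁻¹ • (orthInner A z h₂ h₃ • orthPart A z h₁ + orthInner A z h₁ h₃ • orthPart A z h₂
        + orthInner A z h₁ h₂ • orthPart A z h₃) := by
  have hD2 : (fun w => iteratedFDeriv ℝ 2 (fun w => ‖A w‖ • A w) w ![h₂, h₃]) =ᶠ[𝓝 z]
      fun w => (‖A w‖⁻¹ * ⟪A w, A h₃⟫) • A h₂ + (‖A w‖⁻¹ * ⟪A w, A h₂⟫) • A h₃
        + (‖A w‖⁻¹ * ⟪A h₂, A h₃⟫ - ‖A w‖⁻¹ ^ 3 * (⟪A w, A h₂⟫ * ⟪A w, A h₃⟫)) • A w := by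
    filter_upwards [A.continuous.continuousAt.eventually_ne hz] with w hw
    exact iteratedFDeriv_two_norm_smul_comp_clm_apply A hw h₂ h₃
  have hinv := hasFDerivAt_inv_norm_comp_clm A hz
  have hD2' := ((((hinv.mul (hasFDerivAt_inner_comp_clm_left A (A h₃))).smul
    (hasFDerivAt_const (A h₂) z)).add ((hinv.mul (hasFDerivAt_inner_comp_clm_left A (A h₂))).smul
    (hasFDerivAt_const (A h₃) z))).add (((hinv.mul (hasFDerivAt_const ⟪A h₂, A h₃⟫ z)).sub
    ((hinv.pow 3).mul ((hasFDerivAt_inner_comp_clm_left A (A h₂)).mul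
      (hasFDerivAt_inner_comp_clm_left A (A h₃))))).smul A.hasFDerivAt))
  refine (iteratedFDeriv_succ_apply_cons_of_eventuallyEq
    ((contDiffAt_norm_smul_comp_clm A hz (n := 3)).differentiableAt_iteratedFDeriv (by norm_num))
    hD2 hD2' h₁).trans ?_
  simp only [Pi.mul_apply, smul_zero, neg_smul, smul_neg, zero_add, inv_pow, Pi.sub_apply,
    smul_add, Nat.add_one_sub_one, nsmul_eq_mul, Nat.cast_ofNat, add_apply,
    ContinuousLinearMap.smulRight_apply, smul_apply, ContinuousLinearMap.comp_apply,
    coe_innerSL_apply, smul_eq_mul, neg_apply, sub_apply, orthInner, orthPart,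
    real_inner_comm (A h₁) (A h₂), real_inner_comm (A h₁) (A h₃)]
  match_scalars <;> field_simp <;> ring

end NormSmul

section UnitVector

variable {E : Type*} [NormedAddCommGroup E] [InnerProductSpace ℝ E] {b : E}

theorem inner_sub_inner_smul_left (u w : E) :
    ⟪u - ⟪b, u⟫ • b, w⟫ = ⟪u, w⟫ - ⟪b, u⟫ * ⟪b, w⟫ := by
  rw [inner_sub_left, real_inner_smul_left]

theorem inner_sub_inner_smul_sub_inner_smul (hb : ‖b‖ = 1) (u w : E) :
    ⟪u - ⟪b, u⟫ • b, w - ⟪b, w⟫ • b⟫ = ⟪u, w⟫ - ⟪b, u⟫ * ⟪b, w⟫ := by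
  rw [inner_sub_right, real_inner_smul_right, inner_sub_inner_smul_left,
    inner_sub_inner_smul_left, real_inner_self_eq_norm_sq, hb, real_inner_comm u b]
  ring

end UnitVector

theorem stmt_3_general {E : Type*} [NormedAddCommGroup E] [InnerProductSpace ℝ E]
    (b : E) (hb : ‖b‖ = 1) (c : ℝ)
    (v : E → E) (hv : v = fun y => y - (inner ℝ b y : ℝ) • b)
    (q : E → ℝ) (hq : q = fun y => ‖v y‖)
    (G : E → E) (hG : G = fun y => (c * q y) • v y)
    (η : E → E → E)
    (hη : η = fun y h => h - (inner ℝ b h : ℝ) • b - ((inner ℝ (v y) h : ℝ) / q y ^ 2) • v y)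
    (ηb : E → E → E → ℝ)
    (hηb : ηb = fun y h k =>
      (inner ℝ h k : ℝ) - (inner ℝ b h : ℝ) * (inner ℝ b k : ℝ)
        - (inner ℝ (v y) h : ℝ) * (inner ℝ (v y) k : ℝ) / q y ^ 2)
    (y : E) (hqy : q y ≠ 0) :
    ContDiffAt ℝ 3 G y ∧
      ∀ h₁ h₂ h₃ : E,
        iteratedFDeriv ℝ 3 G y ![h₁, h₂, h₃] =
          (c / q y) •
            (ηb y h₂ h₃ • η y h₁ + ηb y h₁ h₃ • η y h₂ + ηb y h₁ h₂ • η y h₃) := by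
  set A : E →L[ℝ] E := ContinuousLinearMap.id ℝ E - (innerSL ℝ b).smulRight b
  have hA : ∀ z, A z = z - ⟪b, z⟫ • b := fun z => by simp [A]
  have hvA : v = A := by ext z; rw [hv, hA]
  have hGA : G = c • fun w => ‖A w‖ • A w := by
    ext w; simp [hG, hq, hvA, mul_smul]
  have hAy : A y ≠ 0 := by simpa [hq, hvA] using hqy
  refine ⟨hGA ▸ (contDiffAt_norm_smul_comp_clm A hAy).const_smul c, fun h₁ h₂ h₃ => ?_⟩
  rw [hGA, iteratedFDeriv_const_smul_apply (contDiffAt_norm_smul_comp_clm A hAy),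
    smul_apply, iteratedFDeriv_three_norm_smul_comp_clm_apply A hAy]
  subst hη hηb hq
  simp only [orthPart, orthInner, hvA, hA, inner_sub_inner_smul_sub_inner_smul hb,
    inner_sub_inner_smul_left, smul_smul, div_eq_mul_inv]

/-- The non-quadratic part `G(y) = c·q(y)·v(y)` of the Landsberg-type spray coefficients
is `C³` at every `y` with `q y ≠ 0`, and its third derivative is the symmetric trilinear map
`(h₁,h₂,h₃) ↦ (c/q)·(η(h₁)η̄(h₂,h₃) + η(h₂)η̄(h₁,h₃) + η(h₃)η̄(h₁,h₂))`. -/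
theorem stmt_3 {E : Type*} [NormedAddCommGroup E] [InnerProductSpace ℝ E]
    [FiniteDimensional ℝ E]
    (b : E) (hb : ‖b‖ = 1) (c : ℝ)
    (v : E → E) (hv : v = fun y => y - (inner ℝ b y : ℝ) • b)
    (q : E → ℝ) (hq : q = fun y => ‖v y‖)
    (G : E → E) (hG : G = fun y => (c * q y) • v y)
    (η : E → E → E)
    (hη : η = fun y h => h - (inner ℝ b h : ℝ) • b - ((inner ℝ (v y) h : ℝ) / q y ^ 2) • v y)
    (ηb : E → E → E → ℝ)
    (hηb : ηb = fun y h k =>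
      (inner ℝ h k : ℝ) - (inner ℝ b h : ℝ) * (inner ℝ b k : ℝ)
        - (inner ℝ (v y) h : ℝ) * (inner ℝ (v y) k : ℝ) / q y ^ 2)
    (y : E) (hqy : q y ≠ 0) :
    ContDiffAt ℝ 3 G y ∧
      ∀ h₁ h₂ h₃ : E,
        iteratedFDeriv ℝ 3 G y ![h₁, h₂, h₃] =
          (c / q y) •
            (ηb y h₂ h₃ • η y h₁ + ηb y h₁ h₃ • η y h₂ + ηb y h₁ h₂ • η y h₃) :=
  stmt_3_general b hb c v hv q hq G hG η hη ηb hηb y hqy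
end

section
/- Let E be a finite-dimensional real inner product space, b ∈ E a unit vector, and c a real constant. Define G : E → E by G(y) = c · q(y) · v(y), where v(y) = y - ⟨b,y⟩b and q(y) = ‖v(y)‖. Then for every y ∈ E with q(y) ≠ 0, every h₁,h₂,h₃ ∈ E, and every pair of real numbers p₁, p₂, one has ⟨ p₁·b + p₂·y , D³G(y)(h₁,h₂,h₃) ⟩ = 0. In particular ⟨b, D³G(y)(h₁,h₂,h₃)⟩ = 0 and ⟨y, D³G(y)(h₁,h₂,h₃)⟩ = 0. -/
/-!
Since `v` takes values in `bᗮ`, `⟪b, G z⟫` vanishes identically, so only the component `v y` of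
`y` matters. Now `⟪v y, G z⟫ = c * φ (v z)` with `φ w = ⟪a, w⟫ * ‖w‖` and `a = v y`, so everything
reduces to `D³φ(a) = 0`, which is checked by differentiating three times. The conceptual reason:
`φ` is `w ↦ DΦ(w) a / 3` for the cubic-homogeneous `Φ w = ‖w‖ ^ 3`, and Euler's identity gives
`D⁴Φ(a)(a, ·, ·, ·) = (3 - 3) • D³Φ(a) = 0`.
-/

open scoped RealInnerProductSpace

section InnerMulNorm

variable {E : Type*} [NormedAddCommGroup E] [InnerProductSpace ℝ E]

theorem hasFDerivAt_inner_const (u x : E) :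
    HasFDerivAt (fun w : E => ⟪u, w⟫) (innerSL ℝ u) x :=
  (innerSL ℝ u).hasFDerivAt

theorem hasFDerivAt_norm_of_ne_zero {x : E} (hx : x ≠ 0) :
    HasFDerivAt (‖·‖) (‖x‖⁻¹ • innerSL ℝ x) x := by
  have hx' : ‖x‖ ≠ 0 := norm_ne_zero_iff.mpr hx
  have h := (hasStrictFDerivAt_norm_sq x).hasFDerivAt.sqrt (pow_ne_zero 2 hx')
  simp only [Real.sqrt_sq (norm_nonneg _)] at h
  refine h.congr_fderiv ?_
  ext k
  simp only [one_div, mul_inv_rev, smul_apply, coe_innerSL_apply, nsmul_eq_mul, Nat.cast_ofNat,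
    smul_eq_mul]
  field_simp

theorem hasFDerivAt_norm_inv {x : E} (hx : x ≠ 0) :
    HasFDerivAt (fun w : E => ‖w‖⁻¹) (-(‖x‖ ^ 3)⁻¹ • innerSL ℝ x) x := by
  have hx' : ‖x‖ ≠ 0 := norm_ne_zero_iff.mpr hx
  refine ((hasDerivAt_inv hx').comp_hasFDerivAt x (hasFDerivAt_norm_of_ne_zero hx)).congr_fderiv ?_
  ext k
  simp only [neg_smul, neg_apply, smul_apply, coe_innerSL_apply, smul_eq_mul, neg_inj]
  ring

theorem contDiffAt_inner_mul_norm (a : E) {x : E} (hx : x ≠ 0) {n : WithTop ℕ∞} :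
    ContDiffAt ℝ n (fun w => ⟪a, w⟫ * ‖w‖) x :=
  (contDiffAt_const.inner ℝ contDiffAt_id).mul (contDiffAt_norm ℝ hx)

theorem fderiv_inner_mul_norm_apply (a : E) {x : E} (hx : x ≠ 0) (h : E) :
    fderiv ℝ (fun w => ⟪a, w⟫ * ‖w‖) x h = ⟪a, h⟫ * ‖x‖ + ⟪a, x⟫ * ⟪h, x⟫ * ‖x‖⁻¹ := by
  rw [((hasFDerivAt_inner_const a x).fun_mul (hasFDerivAt_norm_of_ne_zero hx)).fderiv]
  simp only [add_apply, smul_apply, coe_innerSL_apply, smul_eq_mul, real_inner_comm x h]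
  ring

theorem iteratedFDeriv_two_inner_mul_norm_apply (a : E) {x : E} (hx : x ≠ 0) (k h : E) :
    iteratedFDeriv ℝ 2 (fun w => ⟪a, w⟫ * ‖w‖) x ![k, h] =
      (⟪a, h⟫ * ⟪k, x⟫ + ⟪a, k⟫ * ⟪h, x⟫ + ⟪a, x⟫ * ⟪h, k⟫) * ‖x‖⁻¹
        - ⟪a, x⟫ * ⟪h, x⟫ * ⟪k, x⟫ * ‖x‖⁻¹ ^ 3 := by
  have hfirst : (fun y => iteratedFDeriv ℝ 1 (fun w => ⟪a, w⟫ * ‖w‖) y ![h]) =ᶠ[nhds x]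
      fun y => ⟪a, h⟫ * ‖y‖ + ⟪a, y⟫ * ⟪h, y⟫ * ‖y‖⁻¹ := by
    filter_upwards [isOpen_ne.mem_nhds hx] with y hy
    rw [iteratedFDeriv_one_apply]
    exact fderiv_inner_mul_norm_apply a hy h
  have hin (u : E) := hasFDerivAt_inner_const u x
  rw [((contDiffAt_inner_mul_norm a hx (n := 2)).differentiableAt_iteratedFDeriv
      (by norm_num)).iteratedFDeriv_succ_apply_left', show Fin.tail ![k, h] = ![h] from rfl,
    hfirst.fderiv_eq, (((hasFDerivAt_norm_of_ne_zero hx).const_mul ⟪a, h⟫).fun_add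
      (((hin a).fun_mul (hin h)).fun_mul (hasFDerivAt_norm_inv hx))).fderiv]
  simp only [Matrix.cons_val_zero, neg_smul, smul_neg, smul_add, add_apply, smul_apply,
    coe_innerSL_apply, smul_eq_mul, neg_apply, real_inner_comm x k, inv_pow]
  ring

theorem iteratedFDeriv_three_inner_mul_norm_self {a : E} (ha : a ≠ 0) :
    iteratedFDeriv ℝ 3 (fun w => ⟪a, w⟫ * ‖w‖) a = 0 := by
  ext m
  have hsecond : (fun y => iteratedFDeriv ℝ 2 (fun w => ⟪a, w⟫ * ‖w‖) y (Fin.tail m)) =ᶠ[nhds a]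
      fun y => (⟪a, m 2⟫ * ⟪m 1, y⟫ + ⟪a, m 1⟫ * ⟪m 2, y⟫ + ⟪a, y⟫ * ⟪m 2, m 1⟫) * ‖y‖⁻¹
        - ⟪a, y⟫ * ⟪m 2, y⟫ * ⟪m 1, y⟫ * ‖y‖⁻¹ ^ 3 := by
    filter_upwards [isOpen_ne.mem_nhds ha] with y hy
    rw [show Fin.tail m = ![m 1, m 2] by ext i; fin_cases i <;> rfl]
    exact iteratedFDeriv_two_inner_mul_norm_apply a hy (m 1) (m 2)
  have hin (u : E) := hasFDerivAt_inner_const u a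
  rw [((contDiffAt_inner_mul_norm a ha (n := 3)).differentiableAt_iteratedFDeriv
      (by norm_num)).iteratedFDeriv_succ_apply_left', hsecond.fderiv_eq,
    ((((((hin (m 1)).const_mul ⟪a, m 2⟫).fun_add ((hin (m 2)).const_mul ⟪a, m 1⟫)).fun_add
      ((hin a).mul_const ⟪m 2, m 1⟫)).fun_mul (hasFDerivAt_norm_inv ha)).fun_sub
      ((((hin a).fun_mul (hin (m 2))).fun_mul (hin (m 1))).fun_mul
        ((hasFDerivAt_norm_inv ha).pow 3))).fderiv]
  have hN : ‖a‖ ≠ 0 := norm_ne_zero_iff.mpr ha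
  simp only [real_inner_comm a (m 1), real_inner_comm a (m 2), inner_self_eq_norm_sq_to_K,
    Real.ringHom_apply, neg_smul, smul_neg, smul_add, Nat.add_one_sub_one, inv_pow, nsmul_eq_mul,
    Nat.cast_ofNat, sub_apply, add_apply, neg_apply, smul_apply, coe_innerSL_apply, smul_eq_mul,
    zero_apply]
  field_simp
  ring

end InnerMulNorm

section IteratedFDeriv

variable {E F G : Type*} [NormedAddCommGroup E] [NormedSpace ℝ E] [NormedAddCommGroup F]
  [InnerProductSpace ℝ F] [NormedAddCommGroup G] [NormedSpace ℝ G]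

theorem inner_iteratedFDeriv_apply (ψ : F) {f : E → F} {x : E} {n : WithTop ℕ∞} {i : ℕ}
    (hf : ContDiffAt ℝ n f x) (hi : i ≤ n) (m : Fin i → E) :
    ⟪ψ, iteratedFDeriv ℝ i f x m⟫ = iteratedFDeriv ℝ i (fun z => ⟪ψ, f z⟫) x m := by
  rw [show (fun z => ⟪ψ, f z⟫) = innerSL ℝ ψ ∘ f from rfl,
    (innerSL ℝ ψ).iteratedFDeriv_comp_left hf hi]
  rfl

theorem inner_iteratedFDeriv_eq_zero_of_forall_inner_eq_zero {ψ : F} {f : E → F}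
    (hψ : ∀ z, ⟪ψ, f z⟫ = 0) {x : E} {n : WithTop ℕ∞} {i : ℕ} (hf : ContDiffAt ℝ n f x)
    (hi : i ≤ n) (m : Fin i → E) :
    ⟪ψ, iteratedFDeriv ℝ i f x m⟫ = 0 := by
  rw [inner_iteratedFDeriv_apply ψ hf hi, funext hψ, iteratedFDeriv_fun_zero]
  rfl

theorem ContinuousLinearMap.iteratedFDeriv_comp_right_of_isOpen (g : G →L[ℝ] E) {f : E → F}
    {s : Set E} (hs : IsOpen s) {n : WithTop ℕ∞} (hf : ContDiffOn ℝ n f s) {x : G}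
    (hx : g x ∈ s) {i : ℕ} (hi : i ≤ n) :
    iteratedFDeriv ℝ i (f ∘ g) x =
      (iteratedFDeriv ℝ i f (g x)).compContinuousLinearMap fun _ => g := by
  have hs' : IsOpen (g ⁻¹' s) := hs.preimage g.continuous
  rw [← iteratedFDerivWithin_of_isOpen i hs' hx, ← iteratedFDerivWithin_of_isOpen i hs hx]
  exact g.iteratedFDerivWithin_comp_right hf hs.uniqueDiffOn hs'.uniqueDiffOn hx hi

end IteratedFDeriv

section MulNormSMul

variable {E F : Type*} [NormedAddCommGroup E] [NormedSpace ℝ E] [NormedAddCommGroup F]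
  [InnerProductSpace ℝ F]

theorem contDiffAt_mul_norm_smul (V : E →L[ℝ] F) (c : ℝ) {y : E} (hy : V y ≠ 0)
    {n : WithTop ℕ∞} :
    ContDiffAt ℝ n (fun z => (c * ‖V z‖) • V z) y :=
  (contDiffAt_const.mul (V.contDiff.contDiffAt.norm ℝ hy)).smul V.contDiff.contDiffAt

theorem inner_self_iteratedFDeriv_three_mul_norm_smul (V : E →L[ℝ] F) (c : ℝ) {y : E}
    (hy : V y ≠ 0) (m : Fin 3 → E) :
    ⟪V y, iteratedFDeriv ℝ 3 (fun z => (c * ‖V z‖) • V z) y m⟫ = 0 := by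
  have hφ : ContDiffAt ℝ 3 ((fun w => ⟪V y, w⟫ * ‖w‖) ∘ V) y :=
    (contDiffAt_inner_mul_norm _ hy).comp y V.contDiff.contDiffAt
  have hinner : (fun z => ⟪V y, (c * ‖V z‖) • V z⟫) = c • ((fun w => ⟪V y, w⟫ * ‖w‖) ∘ V) := by
    ext z
    simp only [real_inner_smul_right, Pi.smul_apply, Function.comp_apply, smul_eq_mul]
    ring
  rw [inner_iteratedFDeriv_apply _ (contDiffAt_mul_norm_smul V c hy) le_rfl, hinner,
    iteratedFDeriv_const_smul_apply hφ,
    V.iteratedFDeriv_comp_right_of_isOpen isOpen_ne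
      (fun w hw => (contDiffAt_inner_mul_norm (V y) hw).contDiffWithinAt) hy le_rfl,
    iteratedFDeriv_three_inner_mul_norm_self hy]
  simp

end MulNormSMul

theorem stmt_4_general {E : Type*} [NormedAddCommGroup E] [InnerProductSpace ℝ E]
    (b : E) (hb : ‖b‖ = 1) (c : ℝ)
    (v : E → E) (hv : v = fun y => y - (inner ℝ b y : ℝ) • b)
    (q : E → ℝ) (hq : q = fun y => ‖v y‖)
    (G : E → E) (hG : G = fun y => (c * q y) • v y)
    (y : E) (hqy : q y ≠ 0) :
    (∀ h₁ h₂ h₃ : E, ∀ p₁ p₂ : ℝ,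
        (inner ℝ (p₁ • b + p₂ • y) (iteratedFDeriv ℝ 3 G y ![h₁, h₂, h₃]) : ℝ) = 0) ∧
    (∀ h₁ h₂ h₃ : E,
        (inner ℝ b (iteratedFDeriv ℝ 3 G y ![h₁, h₂, h₃]) : ℝ) = 0) ∧
    (∀ h₁ h₂ h₃ : E,
        (inner ℝ y (iteratedFDeriv ℝ 3 G y ![h₁, h₂, h₃]) : ℝ) = 0) := by
  set V : E →L[ℝ] E := ContinuousLinearMap.id ℝ E - (innerSL ℝ b).smulRight b
  have hV (z : E) : V z = z - ⟪b, z⟫ • b := by simp [V]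
  have hGV : G = fun z => (c * ‖V z‖) • V z := by simp [hG, hq, hv, hV]
  have hVy : V y ≠ 0 := by simpa [hq, hv, hV] using hqy
  have hbV (z : E) : ⟪b, (c * ‖V z‖) • V z⟫ = 0 := by
    rw [real_inner_smul_right, hV, inner_sub_right, real_inner_smul_right,
      real_inner_self_eq_norm_sq, hb]
    ring
  have hb₀ (h₁ h₂ h₃ : E) : ⟪b, iteratedFDeriv ℝ 3 G y ![h₁, h₂, h₃]⟫ = 0 := by
    rw [hGV]
    exact inner_iteratedFDeriv_eq_zero_of_forall_inner_eq_zero hbV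
      (contDiffAt_mul_norm_smul V c hVy) le_rfl _
  have hy₀ (h₁ h₂ h₃ : E) : ⟪y, iteratedFDeriv ℝ 3 G y ![h₁, h₂, h₃]⟫ = 0 := by
    have h := inner_self_iteratedFDeriv_three_mul_norm_smul V c hVy ![h₁, h₂, h₃]
    rwa [← hGV, hV, inner_sub_left, real_inner_smul_left, hb₀, mul_zero, sub_zero] at h
  refine ⟨fun h₁ h₂ h₃ p₁ p₂ => ?_, hb₀, hy₀⟩
  rw [inner_add_left, real_inner_smul_left, real_inner_smul_left, hb₀, hy₀, mul_zero, mul_zero,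
    add_zero]

/-- Algebraic core of Proposition 1: any vector of the form `p₁·b + p₂·y` annihilates the
third derivative of the Landsberg-type spray coefficient part `G(y) = c·q(y)·v(y)`;
in particular `b` and `y` do. -/
theorem stmt_4 {E : Type*} [NormedAddCommGroup E] [InnerProductSpace ℝ E]
    [FiniteDimensional ℝ E]
    (b : E) (hb : ‖b‖ = 1) (c : ℝ)
    (v : E → E) (hv : v = fun y => y - (inner ℝ b y : ℝ) • b)
    (q : E → ℝ) (hq : q = fun y => ‖v y‖)
    (G : E → E) (hG : G = fun y => (c * q y) • v y)
    (y : E) (hqy : q y ≠ 0) :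
    (∀ h₁ h₂ h₃ : E, ∀ p₁ p₂ : ℝ,
        (inner ℝ (p₁ • b + p₂ • y) (iteratedFDeriv ℝ 3 G y ![h₁, h₂, h₃]) : ℝ) = 0) ∧
    (∀ h₁ h₂ h₃ : E,
        (inner ℝ b (iteratedFDeriv ℝ 3 G y ![h₁, h₂, h₃]) : ℝ) = 0) ∧
    (∀ h₁ h₂ h₃ : E,
        (inner ℝ y (iteratedFDeriv ℝ 3 G y ![h₁, h₂, h₃]) : ℝ) = 0) :=
  stmt_4_general b hb c v hv q hq G hG y hqy
end

section
/- Let g be a real number with -2 < g < 2, h = sqrt(1 - g²/4), G = g/h. Define Q(w) = 1 + g·w + w², Φ(w) = π/2 + arctan(G/2) - arctan((w + g/2)/h), and V(w) = sqrt(Q(w)) · exp((G/2)·Φ(w)). Then for every real w, the first derivative of V satisfies V′(w) = w·V(w)/Q(w). -/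
/-!
`V = √Q · exp((G/2)Φ)` has logarithmic derivative `Q'/(2Q) + (G/2)Φ'`. Completing the square,
`Q(w) = (w + g/2)² + h²`, so `Φ'(w) = -h/Q(w)`, and since `G h = g` the logarithmic derivative is
`(g + 2w)/(2Q) - g/(2Q) = w/Q`.
-/

open Real

theorem HasDerivAt.sqrt_mul_exp {f φ : ℝ → ℝ} {f' φ' x : ℝ} (hf : HasDerivAt f f' x)
    (hφ : HasDerivAt φ φ' x) (hfx : 0 < f x) :
    HasDerivAt (fun y => √(f y) * Real.exp (φ y))
      (√(f x) * Real.exp (φ x) * (f' / (2 * f x) + φ')) x := by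
  refine ((hf.sqrt hfx.ne').fun_mul hφ.exp).congr_deriv ?_
  have hs : 0 < √(f x) := sqrt_pos.mpr hfx
  field_simp
  rw [sq_sqrt hfx.le]
  ring

theorem hasDerivAt_arctan_div_add (a : ℝ) {h : ℝ} (hh : h ≠ 0) (x : ℝ) :
    HasDerivAt (fun y => arctan ((y + a) / h)) (h / ((x + a) ^ 2 + h ^ 2)) x := by
  have hinner : HasDerivAt (fun y => (y + a) / h) (1 / h) x := by
    simpa using ((hasDerivAt_id x).add_const a).div_const h
  convert hinner.arctan using 1
  field_simp
  ring

theorem one_add_mul_add_sq_pos {g : ℝ} (hg₁ : -2 < g) (hg₂ : g < 2) (w : ℝ) :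
    0 < 1 + g * w + w ^ 2 := by
  nlinarith [sq_nonneg (w + g / 2)]

/-- The generating metric function `V(w) = √Q(w)·exp((G/2)Φ(w))` satisfies
`V′(w) = w·V(w)/Q(w)`. -/
theorem stmt_9 (g : ℝ) (hg₁ : -2 < g) (hg₂ : g < 2)
    (h : ℝ) (hh : h = Real.sqrt (1 - g ^ 2 / 4)) (G : ℝ) (hG : G = g / h)
    (Q : ℝ → ℝ) (hQ : Q = fun w => 1 + g * w + w ^ 2)
    (Φ : ℝ → ℝ)
    (hΦ : Φ = fun w => π / 2 + arctan (G / 2) - arctan ((w + g / 2) / h))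
    (V : ℝ → ℝ) (hV : V = fun w => Real.sqrt (Q w) * Real.exp (G / 2 * Φ w)) :
    ∀ w : ℝ, HasDerivAt V (w * V w / Q w) w := by
  intro w
  have hg : 0 < 1 - g ^ 2 / 4 := by nlinarith
  have hh_pos : 0 < h := hh ▸ sqrt_pos.mpr hg
  have hh_sq : h ^ 2 = 1 - g ^ 2 / 4 := hh ▸ sq_sqrt hg.le
  have hQ_pos : 0 < Q w := hQ ▸ one_add_mul_add_sq_pos hg₁ hg₂ w
  have hQ_sq : Q w = (w + g / 2) ^ 2 + h ^ 2 := by rw [hQ, hh_sq]; ring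
  have hQ' : HasDerivAt Q (g + 2 * w) w := by
    subst hQ
    simpa using (((hasDerivAt_id w).const_mul g).const_add 1).fun_add (hasDerivAt_pow 2 w)
  have hΦ' : HasDerivAt Φ (-(h / Q w)) w := by
    subst hΦ
    rw [hQ_sq]
    simpa using (hasDerivAt_arctan_div_add (g / 2) hh_pos.ne' w).const_sub _
  have hGh : G * h = g := by rw [hG]; field_simp
  subst hV
  have hlog : (g + 2 * w) / (2 * Q w) + G / 2 * -(h / Q w) = w / Q w := by
    rw [← hGh]; field_simp; ring
  refine (hQ'.sqrt_mul_exp (hΦ'.const_mul (G / 2)) hQ_pos).congr_deriv ?_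
  rw [hlog]
  ring
end

section
/- Let g be a real number with -2 < g < 2, h = sqrt(1 - g²/4), G = g/h. Define Q(w) = 1 + g·w + w², Φ(w) = π/2 + arctan(G/2) - arctan((w + g/2)/h), and V(w) = sqrt(Q(w)) · exp((G/2)·Φ(w)). Then for every real w, the second derivative of V satisfies V″(w) = V(w)/Q(w)². -/
open Real

/-! `V` solves the linear ODE `V' = w·V/Q`: the logarithmic derivative of `√Q` is `Q'/(2Q) = (g + 2w)/(2Q)`,
and since `Q = h² + (w + g/2)²` the exponential factor contributes `-(G/2)·h/Q = -g/(2Q)`. Differentiating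
once more, `(wV/Q)' = (w²V/Q + V)/Q - wV(g + 2w)/Q² = V/Q²`. -/

section Finsleroid

variable {g h : ℝ}

theorem one_add_mul_add_sq_eq (hh : h ^ 2 = 1 - g ^ 2 / 4) (x : ℝ) :
    1 + g * x + x ^ 2 = h ^ 2 + (x + g / 2) ^ 2 := by
  rw [hh]; ring

theorem one_add_mul_add_sq_pos_s10 (hh : h ^ 2 = 1 - g ^ 2 / 4) (h0 : h ≠ 0) (x : ℝ) :
    0 < 1 + g * x + x ^ 2 := by
  rw [one_add_mul_add_sq_eq hh]; positivity

theorem hasDerivAt_one_add_mul_add_sq (x : ℝ) :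
    HasDerivAt (fun w => 1 + g * w + w ^ 2) (g + 2 * x) x := by
  simpa using (((hasDerivAt_id' x).const_mul g).const_add 1).fun_add (hasDerivAt_pow 2 x)

theorem hasDerivAt_arctan_add_div (hh : h ^ 2 = 1 - g ^ 2 / 4) (h0 : h ≠ 0) (x : ℝ) :
    HasDerivAt (fun w => arctan ((w + g / 2) / h)) (h / (1 + g * x + x ^ 2)) x := by
  have hlin : HasDerivAt (fun w => (w + g / 2) / h) (1 / h) x := by
    simpa using ((hasDerivAt_id' x).add_const (g / 2)).div_const h
  refine hlin.arctan.congr_deriv ?_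
  rw [one_add_mul_add_sq_eq hh]
  field_simp

theorem hasDerivAt_sqrt_mul_exp_arctan (hh : h ^ 2 = 1 - g ^ 2 / 4) (h0 : h ≠ 0) (c x : ℝ) :
    HasDerivAt (fun w => √(1 + g * w + w ^ 2) * exp (g / h / 2 * (c - arctan ((w + g / 2) / h))))
      (√(1 + g * x + x ^ 2) * exp (g / h / 2 * (c - arctan ((x + g / 2) / h))) * x /
        (1 + g * x + x ^ 2)) x := by
  have hQ := one_add_mul_add_sq_pos_s10 hh h0 x
  have hsqrt := (hasDerivAt_one_add_mul_add_sq (g := g) x).sqrt hQ.ne'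
  have hexp := (((hasDerivAt_arctan_add_div hh h0 x).const_sub c).const_mul (g / h / 2)).exp
  refine (hsqrt.fun_mul hexp).congr_deriv ?_
  have hs : √(1 + g * x + x ^ 2) ^ 2 = 1 + g * x + x ^ 2 := sq_sqrt hQ.le
  have hs0 : 0 < √(1 + g * x + x ^ 2) := sqrt_pos.2 hQ
  set q := 1 + g * x + x ^ 2
  set s := √q
  clear_value s q
  subst hs
  field_simp
  ring

theorem iteratedDeriv_two_eq_div_sq_of_hasDerivAt {f : ℝ → ℝ}
    (hQ : ∀ x, 1 + g * x + x ^ 2 ≠ 0)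
    (hf : ∀ x, HasDerivAt f (f x * x / (1 + g * x + x ^ 2)) x) (x : ℝ) :
    iteratedDeriv 2 f x = f x / (1 + g * x + x ^ 2) ^ 2 := by
  have hf' : deriv f = fun x => f x * x / (1 + g * x + x ^ 2) := funext fun x => (hf x).deriv
  rw [iteratedDeriv_succ, iteratedDeriv_one, hf',
    (((hf x).fun_mul (hasDerivAt_id' x)).fun_div (hasDerivAt_one_add_mul_add_sq x) (hQ x)).deriv]
  have hQx := hQ x
  set q := 1 + g * x + x ^ 2 with hq
  field_simp
  linear_combination f x * hq

end Finsleroid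

/-- The generating metric function `V(w) = √Q(w)·exp((G/2)Φ(w))` satisfies
`V″(w) = V(w)/Q(w)²`. -/
theorem stmt_10 (g : ℝ) (hg₁ : -2 < g) (hg₂ : g < 2)
    (h : ℝ) (hh : h = Real.sqrt (1 - g ^ 2 / 4)) (G : ℝ) (hG : G = g / h)
    (Q : ℝ → ℝ) (hQ : Q = fun w => 1 + g * w + w ^ 2)
    (Φ : ℝ → ℝ)
    (hΦ : Φ = fun w => π / 2 + arctan (G / 2) - arctan ((w + g / 2) / h))
    (V : ℝ → ℝ) (hV : V = fun w => Real.sqrt (Q w) * Real.exp (G / 2 * Φ w)) :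
    ∀ w : ℝ, iteratedDeriv 2 V w = V w / Q w ^ 2 := by
  have hdisc : 0 < 1 - g ^ 2 / 4 := by nlinarith
  have hh0 : h ≠ 0 := hh ▸ (sqrt_pos.2 hdisc).ne'
  have hhsq : h ^ 2 = 1 - g ^ 2 / 4 := hh ▸ sq_sqrt hdisc.le
  subst hG hQ hΦ hV
  exact iteratedDeriv_two_eq_div_sq_of_hasDerivAt
    (fun x => (one_add_mul_add_sq_pos_s10 hhsq hh0 x).ne')
    (hasDerivAt_sqrt_mul_exp_arctan hhsq hh0 _)
end

section
/- Let g be a real number with -2 < g < 2, h = sqrt(1 - g²/4), G = g/h. For s ∈ (0,1) define Φ(s) = π/2 + arctan(G/2) - arctan((sqrt(1-s²) + (g/2)s)/(h·s)) and φ(s) = sqrt(1 + g·s·sqrt(1-s²))·exp((G/2)Φ(s)). Then for every s ∈ (0,1) the derivative of φ satisfies φ′(s) = g·sqrt(1-s²)·exp((G/2)Φ(s)) / sqrt(1 + g·s·sqrt(1-s²)). -/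
open Real

/-!
With `c = √(1 - s²)` and `A = 1 + g s c`, the relations `h² + g²/4 = 1` and `c² + s² = 1` give
`A = (h s)² + (c + g s/2)²`, which is exactly the numerator of `1 + u²` for the arctangent's argument
`u`; hence `A > 0` and `Φ' = h / (c A)`. Together with `A' = g (1 - 2s²) / c` and `G h = g`,
`φ' = exp((G/2) Φ) (A' + g / c) / (2 √A) = g c exp((G/2) Φ) / √A`.
-/

theorem hasDerivAt_sqrt_one_sub_sq {s : ℝ} (hs : 0 < 1 - s ^ 2) :
    HasDerivAt (fun x => √(1 - x ^ 2)) (-s / √(1 - s ^ 2)) s := by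
  refine (((hasDerivAt_pow 2 s).const_sub 1).sqrt hs.ne').congr_deriv ?_
  have hc : 0 < √(1 - s ^ 2) := sqrt_pos.2 hs
  field_simp
  norm_num

theorem hasDerivAt_one_add_mul_mul_sqrt_one_sub_sq (g : ℝ) {s : ℝ} (hs : 0 < 1 - s ^ 2) :
    HasDerivAt (fun x => 1 + g * x * √(1 - x ^ 2)) (g * (1 - 2 * s ^ 2) / √(1 - s ^ 2)) s := by
  refine ((((hasDerivAt_id' (x := s)).const_mul g).mul
    (hasDerivAt_sqrt_one_sub_sq hs)).const_add 1).congr_deriv ?_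
  have hc : 0 < √(1 - s ^ 2) := sqrt_pos.2 hs
  field_simp
  linear_combination g * sq_sqrt hs.le

theorem one_add_mul_mul_sqrt_one_sub_sq_eq {g h s : ℝ} (hgh : h ^ 2 = 1 - g ^ 2 / 4)
    (hs : 0 ≤ 1 - s ^ 2) :
    1 + g * s * √(1 - s ^ 2) = (h * s) ^ 2 + (√(1 - s ^ 2) + g / 2 * s) ^ 2 := by
  linear_combination (-s ^ 2) * hgh - sq_sqrt hs

theorem one_add_mul_mul_sqrt_one_sub_sq_pos {g h s : ℝ} (hgh : h ^ 2 = 1 - g ^ 2 / 4)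
    (hhs : h * s ≠ 0) (hs : 0 ≤ 1 - s ^ 2) :
    0 < 1 + g * s * √(1 - s ^ 2) := by
  rw [one_add_mul_mul_sqrt_one_sub_sq_eq hgh hs]
  exact add_pos_of_pos_of_nonneg (sq_pos_of_ne_zero hhs) (sq_nonneg _)

theorem hasDerivAt_arctan_sqrt_one_sub_sq_div {g h s : ℝ} (hgh : h ^ 2 = 1 - g ^ 2 / 4)
    (hhs : h * s ≠ 0) (hs : 0 < 1 - s ^ 2) :
    HasDerivAt (fun x => arctan ((√(1 - x ^ 2) + g / 2 * x) / (h * x)))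
      (-(h / (√(1 - s ^ 2) * (1 + g * s * √(1 - s ^ 2))))) s := by
  have hN := (hasDerivAt_sqrt_one_sub_sq hs).add ((hasDerivAt_id' (x := s)).const_mul (g / 2))
  refine ((hN.fun_div ((hasDerivAt_id' (x := s)).const_mul h) hhs).arctan).congr_deriv ?_
  have hh : h ≠ 0 := left_ne_zero_of_mul hhs
  have hs0 : s ≠ 0 := right_ne_zero_of_mul hhs
  have hc : 0 < √(1 - s ^ 2) := sqrt_pos.2 hs
  have hA := one_add_mul_mul_sqrt_one_sub_sq_pos hgh hhs hs.le
  have hu : 1 + ((√(1 - s ^ 2) + g / 2 * s) / (h * s)) ^ 2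
      = (1 + g * s * √(1 - s ^ 2)) / (h * s) ^ 2 := by
    rw [one_add_mul_mul_sqrt_one_sub_sq_eq hgh hs.le]
    field_simp
  simp only [Pi.add_apply]
  rw [hu]
  field_simp
  linear_combination (-2) * sq_sqrt hs.le

/-- On `0 < s < 1`, the generating metric function `φ(s)` satisfies
`φ′(s) = g·√(1-s²)·exp((G/2)Φ(s)) / √(1 + g·s·√(1-s²))`. -/
theorem stmt_14 (g : ℝ) (hg₁ : -2 < g) (hg₂ : g < 2)
    (h : ℝ) (hh : h = Real.sqrt (1 - g ^ 2 / 4)) (G : ℝ) (hG : G = g / h)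
    (Φ : ℝ → ℝ)
    (hΦ : Φ = fun s => π / 2 + arctan (G / 2)
      - arctan ((Real.sqrt (1 - s ^ 2) + g / 2 * s) / (h * s)))
    (φ : ℝ → ℝ)
    (hφ : φ = fun s =>
      Real.sqrt (1 + g * s * Real.sqrt (1 - s ^ 2)) * Real.exp (G / 2 * Φ s)) :
    ∀ s ∈ Set.Ioo (0 : ℝ) 1,
      HasDerivAt φ
        (g * Real.sqrt (1 - s ^ 2) * Real.exp (G / 2 * Φ s)
          / Real.sqrt (1 + g * s * Real.sqrt (1 - s ^ 2))) s := by
  rintro s ⟨hs0, hs1⟩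
  have hg : 0 < 1 - g ^ 2 / 4 := by nlinarith
  have hh0 : 0 < h := hh ▸ sqrt_pos.2 hg
  have hgh : h ^ 2 = 1 - g ^ 2 / 4 := hh ▸ sq_sqrt hg.le
  have hs : 0 < 1 - s ^ 2 := by nlinarith
  have hhs : h * s ≠ 0 := (mul_pos hh0 hs0).ne'
  have hA := one_add_mul_mul_sqrt_one_sub_sq_pos hgh hhs hs.le
  have hΦ' : HasDerivAt Φ (h / (√(1 - s ^ 2) * (1 + g * s * √(1 - s ^ 2)))) s := by
    subst hΦ
    simpa using
      (hasDerivAt_arctan_sqrt_one_sub_sq_div hgh hhs hs).const_sub (π / 2 + arctan (G / 2))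
  subst hφ hG
  refine (((hasDerivAt_one_add_mul_mul_sqrt_one_sub_sq g hs).sqrt hA.ne').mul
    ((hΦ'.const_mul (g / h / 2)).exp)).congr_deriv ?_
  have hc : 0 < √(1 - s ^ 2) := sqrt_pos.2 hs
  have hsA : 0 < √(1 + g * s * √(1 - s ^ 2)) := sqrt_pos.2 hA
  field_simp
  linear_combination g * sq_sqrt hA.le - (2 * g + 2 * g ^ 2 * s * √(1 - s ^ 2)) * sq_sqrt hs.le
end

section
/- Let E be a finite-dimensional real inner product space, b ∈ E a unit vector, and g a real number with -2 < g < 2; set h = sqrt(1 - g²/4), G = g/h. For y ∈ E write β(y) = ⟨b,y⟩, v(y) = y - β(y)b, q(y) = ‖v(y)‖, B(y) = β(y)² + g·q(y)·β(y) + q(y)², and on the open set U = { y : β(y) > 0 and q(y) > 0 } define K(y) = sqrt(B(y)) · exp( (G/2)·( π/2 + arctan(G/2) - arctan((q(y) + (g/2)β(y))/(h·β(y))) ) ). Then at every y ∈ U the function (1/2)K² is differentiable and its gradient equals (K(y)²/B(y)) · ( y + g·q(y)·b ). -/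
/-!
In the coordinates `s = β`, `t = q` one has `½K² = ½ B exp (G (c - φ))` with
`φ = arctan ((t + g s / 2) / (h s))`. Because `B = h² s² + (t + g s / 2)²` and `G h = g`, the
differential of `G φ` is `g (s dt - t ds) / B`, and the logarithmic differential of `½K²` becomes
`((s + g t) ds + t dt) · 2 / B`. With `dβ = ⟨b, ·⟩`, `q dq = ⟨v, ·⟩` and `y = v + β b` this is the
claimed gradient.
-/

open Real ContinuousLinearMap

section Calculus

variable {F : Type*} [NormedAddCommGroup F] [NormedSpace ℝ F]
  {s t : F → ℝ} {s' t' : F →L[ℝ] ℝ} {x : F}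

theorem HasFDerivAt.norm_of_ne_zero {E : Type*} [NormedAddCommGroup E] [InnerProductSpace ℝ E]
    {f : F → E} {f' : F →L[ℝ] E} (hf : HasFDerivAt f f' x) (h0 : f x ≠ 0) :
    HasFDerivAt (fun y => ‖f y‖) (‖f x‖⁻¹ • (innerSL ℝ (f x)).comp f') x := by
  have hsq : ‖f x‖ ^ 2 ≠ 0 := by positivity
  convert (hf.norm_sq.sqrt hsq) using 1
  · simp only [sqrt_sq (norm_nonneg _)]
  · ext ξ
    simp only [smul_apply, comp_apply, coe_innerSL_apply, smul_eq_mul, sqrt_sq (norm_nonneg _),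
      one_div, mul_inv_rev, nsmul_eq_mul, Nat.cast_ofNat]
    field_simp

theorem finsleroid_quadratic_eq_sum_sq {g h : ℝ} (hh : h ^ 2 = 1 - g ^ 2 / 4) (s t : ℝ) :
    s ^ 2 + g * t * s + t ^ 2 = h ^ 2 * s ^ 2 + (t + g / 2 * s) ^ 2 := by
  rw [hh]; ring

theorem HasFDerivAt.arctan_finsleroid {g h : ℝ} (hh : h ^ 2 = 1 - g ^ 2 / 4) (h0 : h ≠ 0)
    (hs : HasFDerivAt s s' x) (ht : HasFDerivAt t t' x) (hsx : s x ≠ 0) :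
    HasFDerivAt (fun y => Real.arctan ((t y + g / 2 * s y) / (h * s y)))
      ((h / (s x ^ 2 + g * t x * s x + t x ^ 2)) • (s x • t' - t x • s')) x := by
  have hd : h * s x ≠ 0 := mul_ne_zero h0 hsx
  have hu := (ht.fun_add (hs.const_mul (g / 2))).fun_mul
    ((hasDerivAt_inv hd).comp_hasFDerivAt x (hs.const_mul h))
  simp only [Function.comp_def, ← div_eq_mul_inv] at hu
  refine hu.arctan.congr_fderiv ?_
  rw [finsleroid_quadratic_eq_sum_sq hh]
  ext ξ
  simp only [one_div, neg_smul, smul_neg, mul_inv_rev, smul_add, add_apply, neg_apply, smul_apply,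
    smul_eq_mul, sub_apply]
  field_simp
  ring

theorem HasFDerivAt.half_finsleroid_sq {g h G : ℝ} (hh : h ^ 2 = 1 - g ^ 2 / 4) (h0 : h ≠ 0)
    (hG : G * h = g) (c : ℝ) (hs : HasFDerivAt s s' x) (ht : HasFDerivAt t t' x) (hsx : s x ≠ 0) :
    HasFDerivAt
      (fun y => 1 / 2 * ((s y ^ 2 + g * t y * s y + t y ^ 2) *
        Real.exp (G * (c - Real.arctan ((t y + g / 2 * s y) / (h * s y))))))
      (Real.exp (G * (c - Real.arctan ((t x + g / 2 * s x) / (h * s x)))) •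
        ((s x + g * t x) • s' + t x • t')) x := by
  have hB : s x ^ 2 + g * t x * s x + t x ^ 2 ≠ 0 := by
    rw [finsleroid_quadratic_eq_sum_sq hh]; positivity
  have hquad := ((hs.pow 2).fun_add ((ht.const_mul g).fun_mul hs)).fun_add (ht.pow 2)
  have hexp := (((hs.arctan_finsleroid hh h0 ht hsx).const_sub c).const_mul G).exp
  refine ((hquad.fun_mul hexp).const_mul (1 / 2)).congr_fderiv ?_
  ext ξ
  generalize s x ^ 2 + g * t x * s x + t x ^ 2 = B at hB ⊢
  subst hG
  simp only [one_div, smul_neg, Nat.add_one_sub_one, pow_one, nsmul_eq_mul, Nat.cast_ofNat,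
    smul_add, add_apply, neg_apply, smul_apply, sub_apply, smul_eq_mul]
  field_simp
  ring

end Calculus

theorem hasFDerivAt_norm_sub_inner_smul {E : Type*} [NormedAddCommGroup E]
    [InnerProductSpace ℝ E] {b y : E} (hb : ‖b‖ = 1) (hy : y - inner ℝ b y • b ≠ 0) :
    HasFDerivAt (fun z => ‖z - inner ℝ b z • b‖)
      (‖y - inner ℝ b y • b‖⁻¹ • innerSL ℝ (y - inner ℝ b y • b)) y := by
  refine (((hasFDerivAt_id y).sub ((innerSL ℝ b).hasFDerivAt.smul_const b)).norm_of_ne_zero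
    hy).congr_fderiv ?_
  ext ξ
  simp [hb, real_inner_comm, mul_comm]

/-- For the Finsleroid–Finsler metric function `K` with constant Finsleroid charge `g`,
at every `y` with `β(y) = ⟨b,y⟩ > 0` and `q(y) = ‖y - β(y)b‖ > 0`, the function `½K²`
is differentiable with gradient `(K²/B)·(y + g·q·b)`, where `B = β² + gqβ + q²`. -/
theorem stmt_18 {E : Type*} [NormedAddCommGroup E] [InnerProductSpace ℝ E]
    [FiniteDimensional ℝ E]
    (b : E) (hb : ‖b‖ = 1) (g : ℝ) (hg₁ : -2 < g) (hg₂ : g < 2)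
    (h : ℝ) (hh : h = Real.sqrt (1 - g ^ 2 / 4)) (G : ℝ) (hG : G = g / h)
    (β : E → ℝ) (hβ : β = fun y => (inner ℝ b y : ℝ))
    (v : E → E) (hv : v = fun y => y - β y • b)
    (q : E → ℝ) (hq : q = fun y => ‖v y‖)
    (B : E → ℝ) (hB : B = fun y => β y ^ 2 + g * q y * β y + q y ^ 2)
    (K : E → ℝ)
    (hK : K = fun y =>
      Real.sqrt (B y) *
        Real.exp (G / 2 *
          (π / 2 + arctan (G / 2) - arctan ((q y + g / 2 * β y) / (h * β y)))))
    (y : E) (hβy : 0 < β y) (hqy : 0 < q y) :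
    HasGradientAt (fun z => (1 / 2) * K z ^ 2)
      ((K y ^ 2 / B y) • (y + (g * q y) • b)) y := by
  have hg : 0 < 1 - g ^ 2 / 4 := by nlinarith
  have hh0 : 0 < h := hh ▸ sqrt_pos.2 hg
  have hh2 : h ^ 2 = 1 - g ^ 2 / 4 := hh ▸ sq_sqrt hg.le
  have hGh : G * h = g := by rw [hG]; field_simp
  have hB_sum_sq (z : E) : B z = h ^ 2 * β z ^ 2 + (q z + g / 2 * β z) ^ 2 := by
    rw [hB]; exact finsleroid_quadratic_eq_sum_sq hh2 _ _
  have hBy : 0 < B y := by rw [hB_sum_sq]; positivity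
  have hK2 (z : E) : K z ^ 2 = B z *
      exp (G * (π / 2 + arctan (G / 2) - arctan ((q z + g / 2 * β z) / (h * β z)))) := by
    rw [hK, mul_pow, sq_sqrt (by rw [hB_sum_sq]; positivity), ← exp_nat_mul]
    ring_nf
  have hβ' : HasFDerivAt β (innerSL ℝ b) y := hβ ▸ (innerSL ℝ b).hasFDerivAt
  have hq' : HasFDerivAt q ((q y)⁻¹ • innerSL ℝ (v y)) y := by
    subst hq hv hβ
    exact hasFDerivAt_norm_sub_inner_smul hb (norm_pos_iff.1 hqy)
  have hdecomp : y + (g * q y) • b = v y + (β y + g * q y) • b := by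
    rw [hv, add_smul, ← add_assoc, sub_add_cancel]
  have hf : (fun z => 1 / 2 * K z ^ 2) = fun z => 1 / 2 * ((β z ^ 2 + g * q z * β z + q z ^ 2) *
      exp (G * (π / 2 + arctan (G / 2) - arctan ((q z + g / 2 * β z) / (h * β z))))) := by
    funext z
    rw [hK2, hB]
  rw [hasGradientAt_iff_hasFDerivAt, hf, hK2, mul_div_cancel_left₀ _ hBy.ne', hdecomp]
  refine (hβ'.half_finsleroid_sq hh2 hh0.ne' hGh _ hq' hβy.ne').congr_fderiv ?_
  ext ξ
  simp only [smul_add, add_apply, smul_apply, coe_innerSL_apply, smul_eq_mul, map_add, map_smul,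
    InnerProductSpace.toDual_apply_apply]
  field_simp
  ring
end

section
/- Let E be a finite-dimensional real inner product space, b ∈ E a unit vector, and g a real number with -2 < g < 2. Let y ∈ E with v(y) = y - ⟨b,y⟩b ≠ 0, and write β = ⟨b,y⟩, v = v(y), q = ‖v‖, B = β² + g·q·β + q². Let κ be any nonzero real number (playing the role of K²/B). Define linear maps P, P̃ : E → E by P(h) = κ·( h + (g/B)·( q(β + g q)·⟨b,h⟩·b + q·(⟨b,h⟩·v + ⟨v,h⟩·b) - (β/q)·⟨v,h⟩·v ) ) and P̃(h) = κ⁻¹·( h + (g/B)·( -β q·⟨b,h⟩·b - q·(⟨b,h⟩·v + ⟨v,h⟩·b) + ((β + g q)/q)·⟨v,h⟩·v ) ). Then P̃ ∘ P = id_E, i.e. P̃ is the inverse of P. -/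
/-!
In the frame `(b, v)` both tensors are `κ^{±1}` times the identity plus a bilinear form on
`span {b, v}`, say `x ↦ x + ∑ i j, M i j ⟪w j, x⟫ w i` with `w = ![b, v]`. Composing two such
maps gives the coefficient matrix `M + M' + M' G M`, where `G = diag(1, q²)` is the Gram matrix
of `(b, v)`. For the Finsleroid coefficients a direct computation gives
`M + M' = (g² / B) diag(q², 1) = - M' G M`, the cancellation coming from
`β (β + g q) + q² = B`; and `B > 0` because `|g| < 2`.
-/

open Matrix

section LowRankUpdate

variable {ι E : Type*} [Fintype ι] [NormedAddCommGroup E] [InnerProductSpace ℝ E]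

noncomputable def innerCoords (w : ι → E) : E →ₗ[ℝ] ι → ℝ :=
  LinearMap.pi fun j => innerₛₗ ℝ (w j)

noncomputable def idAddLowRank (w : ι → E) (M : Matrix ι ι ℝ) : E →ₗ[ℝ] E :=
  LinearMap.id + Fintype.linearCombination ℝ w ∘ₗ M.mulVecLin ∘ₗ innerCoords w

theorem innerCoords_comp_linearCombination (w : ι → E) :
    innerCoords w ∘ₗ Fintype.linearCombination ℝ w = (gram ℝ w).mulVecLin := by
  ext a j
  simp [innerCoords, Fintype.linearCombination_apply, mulVec, dotProduct, mul_comm]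

theorem idAddLowRank_comp (w : ι → E) (M M' : Matrix ι ι ℝ) :
    idAddLowRank w M' ∘ₗ idAddLowRank w M = idAddLowRank w (M + M' + M' * gram ℝ w * M) := by
  set S := Fintype.linearCombination ℝ w
  set C := innerCoords w
  have hCS : C ∘ₗ S = (gram ℝ w).mulVecLin := innerCoords_comp_linearCombination w
  simp only [idAddLowRank, mulVecLin_add, mulVecLin_mul, LinearMap.add_comp, LinearMap.comp_add,
    LinearMap.id_comp, LinearMap.comp_id, ← hCS, LinearMap.comp_assoc]
  abel

theorem idAddLowRank_zero (w : ι → E) : idAddLowRank w 0 = LinearMap.id := by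
  simp [idAddLowRank]

theorem idAddLowRank_comp_eq_id {w : ι → E} {M M' : Matrix ι ι ℝ}
    (h : M + M' + M' * gram ℝ w * M = 0) :
    idAddLowRank w M' ∘ₗ idAddLowRank w M = LinearMap.id := by
  rw [idAddLowRank_comp, h, idAddLowRank_zero]

theorem idAddLowRank_pair_apply (b v : E) (M : Matrix (Fin 2) (Fin 2) ℝ) (x : E) :
    idAddLowRank ![b, v] M x =
      x + (M 0 0 * inner ℝ b x + M 0 1 * inner ℝ v x) • b +
        (M 1 0 * inner ℝ b x + M 1 1 * inner ℝ v x) • v := by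
  simp [idAddLowRank, innerCoords, Fintype.linearCombination_apply,
    Fin.sum_univ_two, add_assoc]

theorem gram_pair_of_orthogonal {b v : E} (hb : ‖b‖ = 1) (hbv : inner ℝ b v = (0 : ℝ)) :
    gram ℝ ![b, v] = !![1, 0; 0, ‖v‖ ^ 2] := by
  ext i j
  fin_cases i <;> fin_cases j <;> simp [hb, hbv, real_inner_comm b v]

end LowRankUpdate

theorem sq_add_mul_mul_add_sq_pos {g q : ℝ} (β : ℝ) (hg₁ : -2 < g) (hg₂ : g < 2)
    (hq : q ≠ 0) :
    0 < β ^ 2 + g * q * β + q ^ 2 := by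
  have hq2 : 0 < q ^ 2 := by positivity
  -- `4 (β² + g q β + q²) = (2 β + g q)² + (4 - g²) q²`
  nlinarith [sq_nonneg (2 * β + g * q),
    mul_pos (mul_pos (sub_pos.2 hg₂) (neg_lt_iff_pos_add.1 hg₁)) hq2]

/-- The coefficients of `g_{ij} / κ - δ_{ij}` in the frame `(b, v)`; `finsleroidInvMatrix` does
the same for `κ g^{ij} - δ^{ij}`. -/
noncomputable def finsleroidMatrix (g β q B : ℝ) : Matrix (Fin 2) (Fin 2) ℝ :=
  (g / B) • !![q * (β + g * q), q; q, -(β / q)]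

noncomputable def finsleroidInvMatrix (g β q B : ℝ) : Matrix (Fin 2) (Fin 2) ℝ :=
  (g / B) • !![-(β * q), -q; -q, (β + g * q) / q]

theorem finsleroidMatrix_add_inv_add_mul_eq_zero {g β q B : ℝ} (hq : q ≠ 0)
    (hB : B = β ^ 2 + g * q * β + q ^ 2) (hB0 : B ≠ 0) :
    finsleroidMatrix g β q B + finsleroidInvMatrix g β q B +
      finsleroidInvMatrix g β q B * !![1, 0; 0, q ^ 2] * finsleroidMatrix g β q B = 0 := by
  ext i j
  fin_cases i <;> fin_cases j <;> simp [finsleroidMatrix, finsleroidInvMatrix] <;> field_simp <;>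
    rw [hB] <;> ring

theorem stmt_19_general {E : Type*} [NormedAddCommGroup E] [InnerProductSpace ℝ E]
    (b : E) (hb : ‖b‖ = 1) (g : ℝ) (hg₁ : -2 < g) (hg₂ : g < 2)
    (y : E) (β : ℝ) (hβ : β = (inner ℝ b y : ℝ))
    (v : E) (hv : v = y - β • b) (hv0 : v ≠ 0)
    (q : ℝ) (hq : q = ‖v‖)
    (B : ℝ) (hB : B = β ^ 2 + g * q * β + q ^ 2)
    (κ : ℝ) (hκ : κ ≠ 0)
    (P Ptilde : E →ₗ[ℝ] E)
    (hP : ∀ x : E, P x =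
      κ • (x + (g / B) •
        (((q * (β + g * q)) * (inner ℝ b x : ℝ)) • b +
          q • ((inner ℝ b x : ℝ) • v + (inner ℝ v x : ℝ) • b) -
          ((β / q) * (inner ℝ v x : ℝ)) • v)))
    (hPt : ∀ x : E, Ptilde x =
      κ⁻¹ • (x + (g / B) •
        ((-(β * q) * (inner ℝ b x : ℝ)) • b -
          q • ((inner ℝ b x : ℝ) • v + (inner ℝ v x : ℝ) • b) +
          (((β + g * q) / q) * (inner ℝ v x : ℝ)) • v))) :
    Ptilde ∘ₗ P = LinearMap.id := by
  have hq0 : q ≠ 0 := hq ▸ norm_ne_zero_iff.2 hv0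
  have hB0 : B ≠ 0 := hB ▸ (sq_add_mul_mul_add_sq_pos β hg₁ hg₂ hq0).ne'
  have hbv : inner ℝ b v = (0 : ℝ) := by
    rw [hv, inner_sub_right, real_inner_smul_right, real_inner_self_eq_norm_sq, hb, hβ]; ring
  have hPeq : P = κ • idAddLowRank ![b, v] (finsleroidMatrix g β q B) := by
    ext x
    rw [hP, LinearMap.smul_apply, idAddLowRank_pair_apply]
    simp only [finsleroidMatrix, Matrix.smul_apply, smul_eq_mul, of_apply, cons_val',
      cons_val_zero, cons_val_one, cons_val_fin_one]
    module
  have hPteq : Ptilde = κ⁻¹ • idAddLowRank ![b, v] (finsleroidInvMatrix g β q B) := by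
    ext x
    rw [hPt, LinearMap.smul_apply, idAddLowRank_pair_apply]
    simp only [finsleroidInvMatrix, Matrix.smul_apply, smul_eq_mul, of_apply, cons_val',
      cons_val_zero, cons_val_one, cons_val_fin_one]
    module
  rw [hPeq, hPteq, LinearMap.smul_comp, LinearMap.comp_smul, smul_smul, inv_mul_cancel₀ hκ,
    one_smul, idAddLowRank_comp_eq_id]
  rw [gram_pair_of_orthogonal hb hbv, ← hq]
  exact finsleroidMatrix_add_inv_add_mul_eq_zero hq0 hB hB0

/-- The linear map `P̃` representing the claimed reciprocal tensor `g^{ij}` is indeed the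
inverse of the linear map `P` representing the Finsleroid–Finsler metric tensor `g_{ij}`:
`P̃ ∘ P = id`. Here `β = ⟨b,y⟩`, `v = y - βb ≠ 0`, `q = ‖v‖`, `B = β² + gqβ + q²`, and
`κ ≠ 0` plays the role of `K²/B`. -/
theorem stmt_19 {E : Type*} [NormedAddCommGroup E] [InnerProductSpace ℝ E]
    [FiniteDimensional ℝ E]
    (b : E) (hb : ‖b‖ = 1) (g : ℝ) (hg₁ : -2 < g) (hg₂ : g < 2)
    (y : E) (β : ℝ) (hβ : β = (inner ℝ b y : ℝ))
    (v : E) (hv : v = y - β • b) (hv0 : v ≠ 0)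
    (q : ℝ) (hq : q = ‖v‖)
    (B : ℝ) (hB : B = β ^ 2 + g * q * β + q ^ 2)
    (κ : ℝ) (hκ : κ ≠ 0)
    (P Ptilde : E →ₗ[ℝ] E)
    (hP : ∀ x : E, P x =
      κ • (x + (g / B) •
        (((q * (β + g * q)) * (inner ℝ b x : ℝ)) • b +
          q • ((inner ℝ b x : ℝ) • v + (inner ℝ v x : ℝ) • b) -
          ((β / q) * (inner ℝ v x : ℝ)) • v)))
    (hPt : ∀ x : E, Ptilde x =
      κ⁻¹ • (x + (g / B) •
        ((-(β * q) * (inner ℝ b x : ℝ)) • b -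
          q • ((inner ℝ b x : ℝ) • v + (inner ℝ v x : ℝ) • b) +
          (((β + g * q) / q) * (inner ℝ v x : ℝ)) • v))) :
    Ptilde ∘ₗ P = LinearMap.id :=
  stmt_19_general b hb g hg₁ hg₂ y β hβ v hv hv0 q hq B hB κ hκ P Ptilde hP hPt
end
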